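/- arXiv:1606.07909 — 7 statements merged into one kernel-verified Lean document; each statement's English description precedes it below -/
import Mathlib

section
/- Let $\mathcal{A}=I_1\oplus I_2$ be a Banach algebra which is the direct sum of closed ideals $I_1, I_2$, and let $\mathcal{U}$ be a Banach algebra and Banach $\mathcal{A}$-bimodule with compatible actions such that $\overline{\mathcal{A}\mathcal{U}}=\mathcal{U}$ or $\overline{\mathcal{U}\mathcal{A}}=\mathcal{U}$. If $I_2\mathcal{U} = \mathcal{U} I_1 = (0)$, then $\mathcal{U}^2 = (0)$. -/
open Filter Topology

/-- Compatible Banach `A`-bimodule structure on the Banach algebra `U`,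
giving rise to the semidirect product `A ⋉ U`. -/
structure SDP (A : Type*) (U : Type*) [NonUnitalNormedRing A] [NonUnitalNormedRing U] where
  l : A → U → U
  r : U → A → U
  l_add₁ : ∀ (a b : A) (x : U), l (a + b) x = l a x + l b x
  l_add₂ : ∀ (a : A) (x y : U), l a (x + y) = l a x + l a y
  r_add₁ : ∀ (x y : U) (a : A), r (x + y) a = r x a + r y a
  r_add₂ : ∀ (x : U) (a b : A), r x (a + b) = r x a + r x b
  l_mul : ∀ (a b : A) (x : U), l (a * b) x = l a (l b x)
  r_mul : ∀ (x : U) (a b : A), r x (a * b) = r (r x a) b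
  l_r : ∀ (a : A) (x : U) (b : A), r (l a x) b = l a (r x b)
  compat₁ : ∀ (a : A) (x y : U), (l a x) * y = l a (x * y)
  compat₂ : ∀ (x y : U) (a : A), r (x * y) a = x * (r y a)
  compat₃ : ∀ (x : U) (a : A) (y : U), (r x a) * y = x * (l a y)
  norm_l : ∀ (a : A) (x : U), ‖l a x‖ ≤ ‖a‖ * ‖x‖
  norm_r : ∀ (x : U) (a : A), ‖r x a‖ ≤ ‖x‖ * ‖a‖

variable {A U : Type*} [NonUnitalNormedRing A] [NonUnitalNormedRing U]

/-- The semidirect product multiplication on `A × U`. -/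
def SDP.mul (S : SDP A U) (p q : A × U) : A × U :=
  (p.1 * q.1, S.l p.1 q.2 + S.r p.2 q.1 + p.2 * q.2)

/-- `D` is a derivation on the semidirect product `A ⋉ U`. -/
def SDP.IsDer (S : SDP A U) (D : A × U → A × U) : Prop :=
  ∀ p q : A × U, D (S.mul p q) = S.mul p (D q) + S.mul (D p) q

/-- The map on `A × U` assembled from components `δ₁, δ₂, τ₁, τ₂`. -/
def derComp (δ₁ : A → A) (δ₂ : A → U) (τ₁ : U → A) (τ₂ : U → U) : A × U → A × U :=
  fun p => (δ₁ p.1 + τ₁ p.2, δ₂ p.1 + τ₂ p.2)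

/-- The annihilator `ann_A U`. -/
def SDP.ann (S : SDP A U) : Set A := {a | (∀ x, S.l a x = 0) ∧ (∀ x, S.r x a = 0)}

/-- The separating space of a linear map between Banach spaces. -/
def sepSpace {X Y : Type*} [NormedAddCommGroup X] [NormedAddCommGroup Y] (T : X → Y) : Set Y :=
  {y | ∃ u : ℕ → X, Tendsto u atTop (nhds 0) ∧ Tendsto (fun n => T (u n)) atTop (nhds y)}

/-- If `A = I₁ ⊕ I₂` is a direct sum of closed ideals, `A·U` (or `U·A`) has dense linear
span in `U`, and `I₂·U = U·I₁ = (0)`, then `U² = (0)`. -/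
theorem stmt_3 [NormedSpace ℂ A] [NormedSpace ℂ U]
    [IsScalarTower ℂ U U] [SMulCommClass ℂ U U] (S : SDP A U)
    (I₁ I₂ : Submodule ℂ A)
    (hc₁ : IsClosed (I₁ : Set A)) (hc₂ : IsClosed (I₂ : Set A))
    (hi₁ : ∀ a ∈ I₁, ∀ b : A, a * b ∈ I₁ ∧ b * a ∈ I₁)
    (hi₂ : ∀ a ∈ I₂, ∀ b : A, a * b ∈ I₂ ∧ b * a ∈ I₂)
    (hcompl : IsCompl I₁ I₂)
    (hdense :
      Dense ((Submodule.span ℂ {z : U | ∃ (a : A) (x : U), z = S.l a x} : Submodule ℂ U) : Set U) ∨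
      Dense ((Submodule.span ℂ {z : U | ∃ (x : U) (a : A), z = S.r x a} : Submodule ℂ U) : Set U))
    (h21 : ∀ a ∈ I₂, ∀ x : U, S.l a x = 0)
    (h12 : ∀ a ∈ I₁, ∀ x : U, S.r x a = 0) :
    ∀ x y : U, x * y = 0 := by
  intro x y
  rcases hdense with hd | hd
  · have key : ∀ z ∈ (Submodule.span ℂ {z : U | ∃ (a : A) (x : U), z = S.l a x}),
        x * z = 0 := by
      intro z hz
      induction hz using Submodule.span_induction with
      | mem z hz =>
        obtain ⟨a, w, rfl⟩ := hz
        have ha : a ∈ I₁ ⊔ I₂ := by rw [hcompl.sup_eq_top]; trivial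
        obtain ⟨a₁, h1, a₂, h2, rfl⟩ := Submodule.mem_sup.mp ha
        rw [S.l_add₁, h21 a₂ h2, add_zero, ← S.compat₃, h12 a₁ h1, zero_mul]
      | zero => simp
      | add _ _ _ _ h1 h2 => rw [mul_add, h1, h2, add_zero]
      | smul c _ _ h => rw [mul_smul_comm, h, smul_zero]
    have hcl : IsClosed {z : U | x * z = 0} :=
      isClosed_eq (continuous_mul_left x) continuous_const
    exact closure_minimal (fun z hz => key z hz) hcl (hd y)
  · have key : ∀ z ∈ (Submodule.span ℂ {z : U | ∃ (x : U) (a : A), z = S.r x a}),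
        z * y = 0 := by
      intro z hz
      induction hz using Submodule.span_induction with
      | mem z hz =>
        obtain ⟨w, a, rfl⟩ := hz
        have ha : a ∈ I₁ ⊔ I₂ := by rw [hcompl.sup_eq_top]; trivial
        obtain ⟨a₁, h1, a₂, h2, rfl⟩ := Submodule.mem_sup.mp ha
        rw [S.r_add₂, h12 a₁ h1, zero_add, S.compat₃, h21 a₂ h2, mul_zero]
      | zero => simp
      | add _ _ _ _ h1 h2 => rw [add_mul, h1, h2, add_zero]
      | smul c _ _ h => rw [smul_mul_assoc, h, smul_zero]
    have hcl : IsClosed {z : U | z * y = 0} :=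
      isClosed_eq (continuous_mul_right y) continuous_const
    exact closure_minimal (fun z hz => key z hz) hcl (hd x)
end

section
/- Let $\mathcal{B}=C([0,1])$ and $\mathcal{I}=\{f\in\mathcal{B} : f(0)=f(1)=0\}$. There is no closed subalgebra $\mathcal{A}$ of $\mathcal{B}$ with $\mathcal{B} = \mathcal{A}\oplus\mathcal{I}$ as a Banach space direct sum. -/
open unitInterval

/-- There is no closed subalgebra `A` of `C([0,1])` with
`C([0,1]) = A ⊕ {f : f(0) = f(1) = 0}` as a Banach space direct sum. -/
theorem stmt_4 :
    ¬ ∃ A : NonUnitalSubalgebra ℂ C(unitInterval, ℂ),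
      IsClosed (A : Set C(unitInterval, ℂ)) ∧
      (∀ f : C(unitInterval, ℂ), ∃ g ∈ A, (f - g) 0 = 0 ∧ (f - g) 1 = 0) ∧
      (∀ g ∈ A, g 0 = 0 → g 1 = 0 → g = 0) := by
  rintro ⟨A, -, hsurj, hinj⟩
  -- the function x ↦ 1 - x
  set f : C(unitInterval, ℂ) := ⟨fun x => (1 : ℂ) - (x : ℝ), by fun_prop⟩ with hf
  obtain ⟨g, hgA, h0, h1⟩ := hsurj f
  have hg0 : g 0 = 1 := by
    have : f 0 - g 0 = 0 := by simpa using h0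
    have hf0 : f 0 = 1 := by simp [hf]
    rw [hf0] at this; linear_combination -this
  have hg1 : g 1 = 0 := by
    have : f 1 - g 1 = 0 := by simpa using h1
    have hf1 : f 1 = 0 := by simp [hf]
    rw [hf1] at this; linear_combination -this
  -- g*g - g ∈ A vanishes at 0 and 1, hence is 0
  have hmem : g * g - g ∈ A := sub_mem (mul_mem hgA hgA) hgA
  have hzero : g * g - g = 0 := by
    apply hinj _ hmem
    · simp [hg0]
    · simp [hg1]
  have hid : ∀ x, g x = 0 ∨ g x = 1 := by
    intro x
    have : g x * g x - g x = 0 := by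
      have := congrFun (congrArg DFunLike.coe hzero) x
      simpa using this
    have h' : g x * (g x - 1) = 0 := by ring_nf; linear_combination this
    rcases mul_eq_zero.mp h' with h | h
    · exact Or.inl h
    · exact Or.inr (by linear_combination h)
  -- real part is continuous, takes values 1 and 0, so by IVT takes value 1/2
  have hcont : Continuous fun x => (g x).re := by fun_prop
  have hIVT : Set.Icc ((fun x => (g x).re) 1) ((fun x => (g x).re) 0)
      ⊆ Set.range fun x => (g x).re := intermediate_value_univ 1 0 hcont
  have : (1/2 : ℝ) ∈ Set.Icc ((fun x => (g x).re) 1) ((fun x => (g x).re) 0) := by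
    simp [hg0, hg1]; norm_num
  obtain ⟨x, hx⟩ := hIVT this
  rcases hid x with h | h <;> simp [h] at hx <;> norm_num at hx
end

section
/- A linear map $D$ on $\mathcal{A}\ltimes\mathcal{U}$ of the form $D((a,x)) = (\delta_1(a)+\tau_1(x), \delta_2(a)+\tau_2(x))$ is a derivation if and only if: (a) $\delta_1:\mathcal{A}\to\mathcal{A}$ is a derivation; (b) $\delta_2:\mathcal{A}\to\mathcal{U}$ is a derivation; (c) $\tau_1:\mathcal{U}\to\mathcal{A}$ is an $\mathcal{A}$-bimodule homomorphism with $\tau_1(xy)=0$ for all $x,y\in\mathcal{U}$; (d) $\tau_2:\mathcal{U}\to\mathcal{U}$ is linear with $\tau_2(a\cdot x)=a\cdot\tau_2(x)+\delta_1(a)\cdot x+\delta_2(a)x$, $\tau_2(x\cdot a)=\tau_2(x)\cdot a+x\cdot\delta_1(a)+x\delta_2(a)$, and $\tau_2(xy)=x\cdot\tau_1(y)+\tau_1(x)\cdot y+x\tau_2(y)+\tau_2(x)y$. -/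
open Filter Topology

variable {A U : Type*} [NonUnitalNormedRing A] [NonUnitalNormedRing U]

/-- Structure theorem for derivations on `A ⋉ U`: a linear map with components
`δ₁, δ₂, τ₁, τ₂` is a derivation iff `δ₁` is a derivation of `A`, `δ₂` is a derivation
from `A` into `U`, `τ₁` is an `A`-bimodule homomorphism vanishing on products, and `τ₂`
satisfies the three stated identities. -/
theorem stmt_7 [NormedSpace ℂ A] [NormedSpace ℂ U] (S : SDP A U)
    (δ₁ : A → A) (δ₂ : A → U) (τ₁ : U → A) (τ₂ : U → U)
    (hδ₁ : IsLinearMap ℂ δ₁) (hδ₂ : IsLinearMap ℂ δ₂)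
    (hτ₁ : IsLinearMap ℂ τ₁) (hτ₂ : IsLinearMap ℂ τ₂) :
    S.IsDer (derComp δ₁ δ₂ τ₁ τ₂) ↔
      ((∀ a b : A, δ₁ (a * b) = a * δ₁ b + δ₁ a * b) ∧
       (∀ a b : A, δ₂ (a * b) = S.l a (δ₂ b) + S.r (δ₂ a) b) ∧
       ((∀ (a : A) (x : U), τ₁ (S.l a x) = a * τ₁ x) ∧
        (∀ (x : U) (a : A), τ₁ (S.r x a) = τ₁ x * a) ∧
        (∀ x y : U, τ₁ (x * y) = 0)) ∧
       ((∀ (a : A) (x : U),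
          τ₂ (S.l a x) = S.l a (τ₂ x) + S.l (δ₁ a) x + δ₂ a * x) ∧
        (∀ (x : U) (a : A),
          τ₂ (S.r x a) = S.r (τ₂ x) a + S.r x (δ₁ a) + x * δ₂ a) ∧
        (∀ x y : U,
          τ₂ (x * y) = S.r x (τ₁ y) + S.l (τ₁ x) y + x * τ₂ y + τ₂ x * y))) := by
  have l0 : ∀ a : A, S.l a 0 = 0 := fun a => by
    have h := S.l_add₂ a 0 0; simpa using h
  have l0' : ∀ x : U, S.l 0 x = 0 := fun x => by
    have h := S.l_add₁ 0 0 x; simpa using h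
  have r0 : ∀ a : A, S.r 0 a = 0 := fun a => by
    have h := S.r_add₁ 0 0 a; simpa using h
  have r0' : ∀ x : U, S.r x 0 = 0 := fun x => by
    have h := S.r_add₂ x 0 0; simpa using h
  have dz1 : δ₁ 0 = 0 := hδ₁.mk' δ₁ |>.map_zero
  have dz2 : δ₂ 0 = 0 := hδ₂.mk' δ₂ |>.map_zero
  have tz1 : τ₁ 0 = 0 := hτ₁.mk' τ₁ |>.map_zero
  have tz2 : τ₂ 0 = 0 := hτ₂.mk' τ₂ |>.map_zero
  constructor
  · intro h
    refine ⟨?_, ?_, ⟨?_, ?_, ?_⟩, ?_, ?_, ?_⟩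
    · intro a b
      have := h (a, 0) (b, 0)
      simp [SDP.mul, derComp, l0, l0', r0, r0', dz1, dz2, tz1, tz2, Prod.ext_iff] at this
      rw [this.1]
    · intro a b
      have := h (a, 0) (b, 0)
      simp [SDP.mul, derComp, l0, l0', r0, r0', dz1, dz2, tz1, tz2, Prod.ext_iff] at this
      rw [this.2]; try abel
    · intro a x
      have := h (a, 0) (0, x)
      simp [SDP.mul, derComp, l0, l0', r0, r0', dz1, dz2, tz1, tz2, Prod.ext_iff] at this
      rw [this.1]
    · intro x a
      have := h (0, x) (a, 0)
      simp [SDP.mul, derComp, l0, l0', r0, r0', dz1, dz2, tz1, tz2, Prod.ext_iff] at this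
      rw [this.1]
    · intro x y
      have := h (0, x) (0, y)
      simp [SDP.mul, derComp, l0, l0', r0, r0', dz1, dz2, tz1, tz2, Prod.ext_iff] at this
      rw [this.1]
    · intro a x
      have := h (a, 0) (0, x)
      simp [SDP.mul, derComp, l0, l0', r0, r0', dz1, dz2, tz1, tz2, Prod.ext_iff] at this
      rw [this.2]; try abel
    · intro x a
      have := h (0, x) (a, 0)
      simp [SDP.mul, derComp, l0, l0', r0, r0', dz1, dz2, tz1, tz2, Prod.ext_iff] at this
      rw [this.2]; try abel
    · intro x y
      have := h (0, x) (0, y)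
      simp [SDP.mul, derComp, l0, l0', r0, r0', dz1, dz2, tz1, tz2, Prod.ext_iff] at this
      rw [this.2]; try abel
  · rintro ⟨h1, h2, ⟨h3, h4, h5⟩, h6, h7, h8⟩
    intro p q
    obtain ⟨a, x⟩ := p; obtain ⟨b, y⟩ := q
    refine Prod.ext ?_ ?_
    · simp only [SDP.mul, derComp, Prod.mk_add_mk]
      rw [hτ₁.map_add, hτ₁.map_add, h1, h3, h4, h5, mul_add, add_mul]
      abel
    · simp only [SDP.mul, derComp, Prod.mk_add_mk]
      rw [hτ₂.map_add, hτ₂.map_add, h2, h6, h7, h8]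
      simp only [S.l_add₁, S.l_add₂, S.r_add₁, S.r_add₂, mul_add, add_mul]
      abel
end

section
/- Let $D=(\delta_1+\tau_1,\delta_2+\tau_2)$ be a derivation on $\mathcal{A}\ltimes\mathcal{U}$. Then the separating space $\mathfrak{S}(\tau_1)$ is a two-sided ideal of $\mathcal{A}$, and if $\tau_2$ is continuous then $\mathfrak{S}(\tau_1)\subseteq ann_{\mathcal{A}}\mathcal{U}$. -/
open Filter Topology

variable {A U : Type*} [NonUnitalNormedRing A] [NonUnitalNormedRing U]

/-!
Evaluating the derivation identity on the pairs `(a, 0)·(0, y)`, `(0, x)·(a, 0)` and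
`(0, x)·(0, y)` shows that `τ₁(a·y) = a τ₁(y)`, `τ₁(x·a) = τ₁(x) a` and
`τ₂(xy) = x·τ₁(y) + x τ₂(y) + τ₁(x)·y + τ₂(x) y`. The module actions are bounded, so the first
two identities carry null sequences to null sequences, which makes `𝔖(τ₁)` an ideal. If
`x_n → 0` and `τ₁(x_n) → a`, the third identity writes `τ₁(x_n)·y` as a sum of terms that tend
to `0` once `τ₂` is continuous, while `τ₁(x_n)·y → a·y`; hence `a·y = 0`, and likewise `y·a = 0`.
-/

section SepSpace

variable {X Y Z : Type*} [NormedAddCommGroup X] [NormedAddCommGroup Y] [NormedAddCommGroup Z]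

theorem zero_mem_sepSpace {F : Type*} [FunLike F X Y] [AddMonoidHomClass F X Y] (T : F) :
    (0 : Y) ∈ sepSpace T :=
  ⟨fun _ => 0, tendsto_const_nhds, by simp⟩

theorem add_mem_sepSpace {F : Type*} [FunLike F X Y] [AddMonoidHomClass F X Y] (T : F)
    {y y' : Y} (hy : y ∈ sepSpace T) (hy' : y' ∈ sepSpace T) : y + y' ∈ sepSpace T := by
  obtain ⟨u, hu0, hu⟩ := hy
  obtain ⟨v, hv0, hv⟩ := hy'
  exact ⟨fun n => u n + v n, by simpa using hu0.add hv0, by simpa using hu.add hv⟩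

theorem mapsTo_sepSpace {T : X → Y} {g : X → X} {f : Y → Y}
    (hg : Tendsto g (𝓝 0) (𝓝 0)) (hf : Continuous f) (hcomm : ∀ x, T (g x) = f (T x)) :
    Set.MapsTo f (sepSpace T) (sepSpace T) := by
  rintro y ⟨u, hu0, hu⟩
  exact ⟨g ∘ u, hg.comp hu0, by simpa [Function.comp_def, hcomm] using (hf.tendsto y).comp hu⟩

theorem apply_eq_of_mem_sepSpace {T : X → Y} {f : Y → Z} {F : X → Z}
    (hf : Continuous f) (hF : Continuous F) (hcomm : ∀ x, f (T x) = F x)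
    {y : Y} (hy : y ∈ sepSpace T) : f y = F 0 := by
  obtain ⟨u, hu0, hu⟩ := hy
  refine tendsto_nhds_unique ((hf.tendsto y).comp hu) ?_
  simpa [Function.comp_def, hcomm] using (hF.tendsto 0).comp hu0

end SepSpace

namespace SDP

variable (S : SDP A U)

theorem l_zero_right (a : A) : S.l a 0 = 0 := by
  simpa using S.l_add₂ a 0 0

theorem l_zero_left (x : U) : S.l 0 x = 0 := by
  simpa using S.l_add₁ 0 0 x

theorem r_zero_left (a : A) : S.r 0 a = 0 := by
  simpa using S.r_add₁ 0 0 a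

theorem r_zero_right (x : U) : S.r x 0 = 0 := by
  simpa using S.r_add₂ x 0 0

theorem continuous_l (a : A) : Continuous (S.l a) :=
  AddMonoidHomClass.continuous_of_bound (AddMonoidHom.mk' (S.l a) (S.l_add₂ a)) ‖a‖
    (S.norm_l a)

theorem continuous_l_left (x : U) : Continuous fun a => S.l a x :=
  AddMonoidHomClass.continuous_of_bound (AddMonoidHom.mk' (S.l · x) (S.l_add₁ · · x)) ‖x‖
    fun a => (S.norm_l a x).trans_eq (mul_comm _ _)

theorem continuous_r (x : U) : Continuous (S.r x) :=
  AddMonoidHomClass.continuous_of_bound (AddMonoidHom.mk' (S.r x) (S.r_add₂ x)) ‖x‖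
    (S.norm_r x)

theorem continuous_r_left (a : A) : Continuous fun x => S.r x a :=
  AddMonoidHomClass.continuous_of_bound (AddMonoidHom.mk' (S.r · a) (S.r_add₁ · · a)) ‖a‖
    fun x => (S.norm_r x a).trans_eq (mul_comm _ _)

@[simp]
theorem mul_zero_left (q : A × U) : S.mul 0 q = 0 := by
  simp [SDP.mul, l_zero_left, r_zero_left]

@[simp]
theorem mul_zero_right (p : A × U) : S.mul p 0 = 0 := by
  simp [SDP.mul, l_zero_right, r_zero_right]

namespace IsDer

variable {S} {D : A × U → A × U}

theorem map_zero (hD : S.IsDer D) : D 0 = 0 := by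
  simpa using hD 0 0

theorem fst_l (hD : S.IsDer D) (a : A) (y : U) : (D (0, S.l a y)).1 = a * (D (0, y)).1 := by
  simpa [SDP.mul, l_zero_left, r_zero_left] using congrArg Prod.fst (hD (a, 0) (0, y))

theorem fst_r (hD : S.IsDer D) (x : U) (a : A) : (D (0, S.r x a)).1 = (D (0, x)).1 * a := by
  simpa [SDP.mul, l_zero_right, r_zero_right] using congrArg Prod.fst (hD (0, x) (a, 0))

theorem snd_mul (hD : S.IsDer D) (x y : U) :
    (D (0, x * y)).2 = S.r x (D (0, y)).1 + x * (D (0, y)).2 + S.l (D (0, x)).1 y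
      + (D (0, x)).2 * y := by
  have h := congrArg Prod.snd (hD (0, x) (0, y))
  simp [SDP.mul, l_zero_left, r_zero_right] at h
  rw [h]; abel

theorem mul_mem_sepSpace_left (hD : S.IsDer D) {a : A}
    (ha : a ∈ sepSpace fun x => (D (0, x)).1) (b : A) :
    b * a ∈ sepSpace fun x => (D (0, x)).1 :=
  mapsTo_sepSpace (by simpa [l_zero_right] using (S.continuous_l b).tendsto 0)
    (continuous_const_mul b) (hD.fst_l b) ha

theorem mul_mem_sepSpace_right (hD : S.IsDer D) {a : A}
    (ha : a ∈ sepSpace fun x => (D (0, x)).1) (b : A) :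
    a * b ∈ sepSpace fun x => (D (0, x)).1 :=
  mapsTo_sepSpace (by simpa [r_zero_left] using (S.continuous_r_left b).tendsto 0)
    (continuous_mul_const b) (hD.fst_r · b) ha

theorem l_eq_zero_of_mem_sepSpace (hD : S.IsDer D) (hcont : Continuous fun x => (D (0, x)).2)
    {a : A} (ha : a ∈ sepSpace fun x => (D (0, x)).1) (y : U) : S.l a y = 0 := by
  have hσ0 : (D (0, 0)).2 = 0 := congrArg Prod.snd hD.map_zero
  have hF : Continuous fun x =>
      (D (0, x * y)).2 - S.r x (D (0, y)).1 - x * (D (0, y)).2 - (D (0, x)).2 * y :=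
    ((hcont.comp (continuous_mul_const y)).sub (S.continuous_r_left _)).sub
      (continuous_mul_const _) |>.sub (hcont.mul continuous_const)
  have h := apply_eq_of_mem_sepSpace (S.continuous_l_left y) hF
    (fun x => by rw [hD.snd_mul]; abel) ha
  simpa [hσ0, r_zero_left] using h

theorem r_eq_zero_of_mem_sepSpace (hD : S.IsDer D) (hcont : Continuous fun x => (D (0, x)).2)
    {a : A} (ha : a ∈ sepSpace fun x => (D (0, x)).1) (x : U) : S.r x a = 0 := by
  have hσ0 : (D (0, 0)).2 = 0 := congrArg Prod.snd hD.map_zero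
  have hF : Continuous fun y =>
      (D (0, x * y)).2 - x * (D (0, y)).2 - S.l (D (0, x)).1 y - (D (0, x)).2 * y :=
    ((hcont.comp (continuous_const_mul x)).sub ((continuous_const_mul x).comp hcont)).sub
      (S.continuous_l _) |>.sub (continuous_const_mul _)
  have h := apply_eq_of_mem_sepSpace (S.continuous_r x) hF
    (fun y => by rw [hD.snd_mul]; abel) ha
  simpa [hσ0, l_zero_right] using h

theorem sepSpace_subset_ann (hD : S.IsDer D) (hcont : Continuous fun x => (D (0, x)).2) :
    (sepSpace fun x => (D (0, x)).1) ⊆ S.ann :=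
  fun _ ha => ⟨hD.l_eq_zero_of_mem_sepSpace hcont ha, (hD.r_eq_zero_of_mem_sepSpace hcont ha ·)⟩

end IsDer

end SDP

theorem stmt_11_general [NormedSpace ℂ A] [NormedSpace ℂ U] (S : SDP A U)
    (δ₁ : A → A) (δ₂ : A → U) (τ₁ : U → A) (τ₂ : U → U)
    (hτ₁ : IsLinearMap ℂ τ₁)
    (hD : S.IsDer (derComp δ₁ δ₂ τ₁ τ₂)) :
    ((0 : A) ∈ sepSpace τ₁) ∧
    (∀ a b : A, a ∈ sepSpace τ₁ → b ∈ sepSpace τ₁ → a + b ∈ sepSpace τ₁) ∧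
    (∀ a ∈ sepSpace τ₁, ∀ b : A, b * a ∈ sepSpace τ₁ ∧ a * b ∈ sepSpace τ₁) ∧
    (Continuous τ₂ → sepSpace τ₁ ⊆ S.ann) := by
  have hδ₁ : δ₁ 0 = 0 := by
    simpa [derComp, hτ₁.map_zero] using congrArg Prod.fst hD.map_zero
  have hτ₁_eq : τ₁ = fun x => (derComp δ₁ δ₂ τ₁ τ₂ (0, x)).1 := by
    funext x
    simp [derComp, hδ₁]
  refine ⟨zero_mem_sepSpace (hτ₁.mk' τ₁), fun _ _ => add_mem_sepSpace (hτ₁.mk' τ₁),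
    fun a ha b => ?_, fun hτ₂ => ?_⟩
  · rw [hτ₁_eq] at ha ⊢
    exact ⟨hD.mul_mem_sepSpace_left ha b, hD.mul_mem_sepSpace_right ha b⟩
  · rw [hτ₁_eq]
    exact hD.sepSpace_subset_ann (continuous_const.add hτ₂ : Continuous fun x => δ₂ 0 + τ₂ x)

/-- For a derivation `D = (δ₁ + τ₁, δ₂ + τ₂)` on `A ⋉ U`, the separating space
`𝔖(τ₁)` is a two-sided ideal of `A`, and if `τ₂` is continuous then
`𝔖(τ₁) ⊆ ann_A U`. -/
theorem stmt_11 [NormedSpace ℂ A] [NormedSpace ℂ U] (S : SDP A U)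
    (δ₁ : A → A) (δ₂ : A → U) (τ₁ : U → A) (τ₂ : U → U)
    (hδ₁ : IsLinearMap ℂ δ₁) (hδ₂ : IsLinearMap ℂ δ₂)
    (hτ₁ : IsLinearMap ℂ τ₁) (hτ₂ : IsLinearMap ℂ τ₂)
    (hD : S.IsDer (derComp δ₁ δ₂ τ₁ τ₂)) :
    ((0 : A) ∈ sepSpace τ₁) ∧
    (∀ a b : A, a ∈ sepSpace τ₁ → b ∈ sepSpace τ₁ → a + b ∈ sepSpace τ₁) ∧
    (∀ a ∈ sepSpace τ₁, ∀ b : A, b * a ∈ sepSpace τ₁ ∧ a * b ∈ sepSpace τ₁) ∧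
    (Continuous τ₂ → sepSpace τ₁ ⊆ S.ann) :=
  stmt_11_general S δ₁ δ₂ τ₁ τ₂ hτ₁ hD
end

section
/- Let $D=(\delta_1+\tau_1,\delta_2+\tau_2)$ be a derivation on $\mathcal{A}\ltimes\mathcal{U}$. If $ann_{\mathcal{A}}\mathcal{U} = (0)$ and both $\tau_2$ and $\delta_2$ are continuous, then $D$ is continuous. -/
open Filter Topology

variable {A U : Type*} [NonUnitalNormedRing A] [NonUnitalNormedRing U]

/-- If `ann_A U = (0)` and both `τ₂` and `δ₂` are continuous, then the derivation
`D = (δ₁ + τ₁, δ₂ + τ₂)` on `A ⋉ U` is continuous. -/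
theorem stmt_13 [NormedSpace ℂ A] [NormedSpace ℂ U]
    [CompleteSpace A] [CompleteSpace U] (S : SDP A U)
    (δ₁ : A → A) (δ₂ : A → U) (τ₁ : U → A) (τ₂ : U → U)
    (hδ₁ : IsLinearMap ℂ δ₁) (hδ₂ : IsLinearMap ℂ δ₂)
    (hτ₁ : IsLinearMap ℂ τ₁) (hτ₂ : IsLinearMap ℂ τ₂)
    (hD : S.IsDer (derComp δ₁ δ₂ τ₁ τ₂))
    (hann : ∀ a : A, a ∈ S.ann → a = 0)
    (hcτ₂ : Continuous τ₂) (hcδ₂ : Continuous δ₂) :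
    Continuous (derComp δ₁ δ₂ τ₁ τ₂) := by
  -- zero lemmas
  have l0 : ∀ x : U, S.l 0 x = 0 := by
    intro x; have h := S.l_add₁ 0 0 x; rw [add_zero] at h; exact (left_eq_add.mp h)
  have lz : ∀ a : A, S.l a 0 = 0 := by
    intro a; have h := S.l_add₂ a 0 0; rw [add_zero] at h; exact (left_eq_add.mp h)
  have r0 : ∀ a : A, S.r 0 a = 0 := by
    intro a; have h := S.r_add₁ 0 0 a; rw [add_zero] at h; exact (left_eq_add.mp h)
  have rz : ∀ x : U, S.r x 0 = 0 := by
    intro x; have h := S.r_add₂ x 0 0; rw [add_zero] at h; exact (left_eq_add.mp h)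
  -- subtraction lemmas
  have lsub : ∀ (a b : A) (x : U), S.l (a - b) x = S.l a x - S.l b x := by
    intro a b x
    have h := S.l_add₁ (a - b) b x
    rw [sub_add_cancel] at h
    exact eq_sub_of_add_eq h.symm
  have rsub : ∀ (x : U) (a b : A), S.r x (a - b) = S.r x a - S.r x b := by
    intro x a b
    have h := S.r_add₂ x (a - b) b
    rw [sub_add_cancel] at h
    exact eq_sub_of_add_eq h.symm
  -- tendsto helpers
  have lten : ∀ {v : ℕ → A} (x : U), Tendsto v atTop (𝓝 0) →
      Tendsto (fun n => S.l (v n) x) atTop (𝓝 0) := by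
    intro v x hv
    refine squeeze_zero_norm (fun n => S.norm_l (v n) x) ?_
    simpa using hv.norm.mul_const ‖x‖
  have rten : ∀ {v : ℕ → A} (x : U), Tendsto v atTop (𝓝 0) →
      Tendsto (fun n => S.r x (v n)) atTop (𝓝 0) := by
    intro v x hv
    refine squeeze_zero_norm (fun n => S.norm_r x (v n)) ?_
    simpa using hv.norm.const_mul ‖x‖
  have lten2 : ∀ {w : ℕ → U} (a : A), Tendsto w atTop (𝓝 0) →
      Tendsto (fun n => S.l a (w n)) atTop (𝓝 0) := by
    intro w a hw
    refine squeeze_zero_norm (fun n => S.norm_l a (w n)) ?_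
    simpa using hw.norm.const_mul ‖a‖
  have rten2 : ∀ {w : ℕ → U} (a : A), Tendsto w atTop (𝓝 0) →
      Tendsto (fun n => S.r (w n) a) atTop (𝓝 0) := by
    intro w a hw
    refine squeeze_zero_norm (fun n => S.norm_r (w n) a) ?_
    simpa using hw.norm.mul_const ‖a‖
  -- key derivation identities
  have hlδ : ∀ (a : A) (x : U), τ₂ (S.l a x) = S.l a (τ₂ x) + (S.l (δ₁ a) x + δ₂ a * x) := by
    intro a x
    have h := hD (a, 0) (0, x)
    simp [derComp, SDP.mul, l0, lz, r0, rz, hδ₁.map_zero, hδ₂.map_zero, hτ₁.map_zero,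
      hτ₂.map_zero, Prod.ext_iff] at h
    exact h.2
  have hrδ : ∀ (a : A) (x : U), τ₂ (S.r x a) = S.r x (δ₁ a) + x * δ₂ a + S.r (τ₂ x) a := by
    intro a x
    have h := hD (0, x) (a, 0)
    simp [derComp, SDP.mul, l0, lz, r0, rz, hδ₁.map_zero, hδ₂.map_zero, hτ₁.map_zero,
      hτ₂.map_zero, Prod.ext_iff] at h
    exact h.2
  have hτ : ∀ (x y : U), τ₂ (x * y) = S.r x (τ₁ y) + x * τ₂ y + (S.l (τ₁ x) y + τ₂ x * y) := by
    intro x y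
    have h := hD (0, x) (0, y)
    simp [derComp, SDP.mul, l0, lz, r0, rz, hδ₁.map_zero, hδ₂.map_zero, hτ₁.map_zero,
      hτ₂.map_zero, Prod.ext_iff] at h
    exact h.2
  have hτ₂0 : Tendsto τ₂ (𝓝 0) (𝓝 0) := by
    have := hcτ₂.tendsto 0; rwa [hτ₂.map_zero] at this
  have hδ₂0 : Tendsto δ₂ (𝓝 0) (𝓝 0) := by
    have := hcδ₂.tendsto 0; rwa [hδ₂.map_zero] at this
  -- separating space of δ₁ is trivial
  have keyδ : ∀ {v : ℕ → A} {b : A}, Tendsto v atTop (𝓝 0) →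
      Tendsto (fun n => δ₁ (v n)) atTop (𝓝 b) → b = 0 := by
    intro v b hv hb
    have hd : Tendsto (fun n => δ₁ (v n) - b) atTop (𝓝 0) := by
      simpa using hb.sub (tendsto_const_nhds (x := b))
    apply hann
    constructor
    · intro z
      have h1 : Tendsto (fun n => S.l (δ₁ (v n)) z) atTop (𝓝 (S.l b z)) := by
        have h2 := lten z hd
        simp only [lsub] at h2
        simpa using h2.add (tendsto_const_nhds (x := S.l b z))
      have e : ∀ n, S.l (δ₁ (v n)) z
          = τ₂ (S.l (v n) z) - S.l (v n) (τ₂ z) - δ₂ (v n) * z := by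
        intro n; rw [hlδ (v n) z]; abel
      have h2 : Tendsto (fun n => S.l (δ₁ (v n)) z) atTop (𝓝 0) := by
        have t1 : Tendsto (fun n => τ₂ (S.l (v n) z)) atTop (𝓝 0) := hτ₂0.comp (lten z hv)
        have t2 := lten (τ₂ z) hv
        have t3 : Tendsto (fun n => δ₂ (v n) * z) atTop (𝓝 0) := by
          simpa using (hδ₂0.comp hv).mul_const z
        have t := (t1.sub t2).sub t3
        simp only [sub_zero] at t
        simpa only [← e] using t
      exact tendsto_nhds_unique h1 h2
    · intro z
      have h1 : Tendsto (fun n => S.r z (δ₁ (v n))) atTop (𝓝 (S.r z b)) := by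
        have h2 := rten z hd
        simp only [rsub] at h2
        simpa using h2.add (tendsto_const_nhds (x := S.r z b))
      have e : ∀ n, S.r z (δ₁ (v n))
          = τ₂ (S.r z (v n)) - z * δ₂ (v n) - S.r (τ₂ z) (v n) := by
        intro n; rw [hrδ (v n) z]; abel
      have h2 : Tendsto (fun n => S.r z (δ₁ (v n))) atTop (𝓝 0) := by
        have t1 : Tendsto (fun n => τ₂ (S.r z (v n))) atTop (𝓝 0) := hτ₂0.comp (rten z hv)
        have t2 : Tendsto (fun n => z * δ₂ (v n)) atTop (𝓝 0) := by
          simpa using (hδ₂0.comp hv).const_mul z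
        have t3 := rten (τ₂ z) hv
        have t := (t1.sub t2).sub t3
        simp only [sub_zero] at t
        simpa only [← e] using t
      exact tendsto_nhds_unique h1 h2
  -- separating space of τ₁ is trivial
  have keyτ : ∀ {w : ℕ → U} {b : A}, Tendsto w atTop (𝓝 0) →
      Tendsto (fun n => τ₁ (w n)) atTop (𝓝 b) → b = 0 := by
    intro w b hw hb
    have hd : Tendsto (fun n => τ₁ (w n) - b) atTop (𝓝 0) := by
      simpa using hb.sub (tendsto_const_nhds (x := b))
    apply hann
    constructor
    · intro z
      have h1 : Tendsto (fun n => S.l (τ₁ (w n)) z) atTop (𝓝 (S.l b z)) := by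
        have h2 := lten z hd
        simp only [lsub] at h2
        simpa using h2.add (tendsto_const_nhds (x := S.l b z))
      have e : ∀ n, S.l (τ₁ (w n)) z
          = τ₂ (w n * z) - S.r (w n) (τ₁ z) - w n * τ₂ z - τ₂ (w n) * z := by
        intro n; rw [hτ (w n) z]; abel
      have h2 : Tendsto (fun n => S.l (τ₁ (w n)) z) atTop (𝓝 0) := by
        have t1 : Tendsto (fun n => τ₂ (w n * z)) atTop (𝓝 0) := by
          refine hτ₂0.comp ?_
          simpa using hw.mul_const z
        have t2 := rten2 (τ₁ z) hw
        have t3 : Tendsto (fun n => w n * τ₂ z) atTop (𝓝 0) := by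
          simpa using hw.mul_const (τ₂ z)
        have t4 : Tendsto (fun n => τ₂ (w n) * z) atTop (𝓝 0) := by
          simpa using (hτ₂0.comp hw).mul_const z
        have t := ((t1.sub t2).sub t3).sub t4
        simp only [sub_zero] at t
        simpa only [← e] using t
      exact tendsto_nhds_unique h1 h2
    · intro z
      have h1 : Tendsto (fun n => S.r z (τ₁ (w n))) atTop (𝓝 (S.r z b)) := by
        have h2 := rten z hd
        simp only [rsub] at h2
        simpa using h2.add (tendsto_const_nhds (x := S.r z b))
      have e : ∀ n, S.r z (τ₁ (w n))
          = τ₂ (z * w n) - z * τ₂ (w n) - S.l (τ₁ z) (w n) - τ₂ z * w n := by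
        intro n; rw [hτ z (w n)]; abel
      have h2 : Tendsto (fun n => S.r z (τ₁ (w n))) atTop (𝓝 0) := by
        have t1 : Tendsto (fun n => τ₂ (z * w n)) atTop (𝓝 0) := by
          refine hτ₂0.comp ?_
          simpa using hw.const_mul z
        have t2 : Tendsto (fun n => z * τ₂ (w n)) atTop (𝓝 0) := by
          simpa using (hτ₂0.comp hw).const_mul z
        have t3 := lten2 (τ₁ z) hw
        have t4 : Tendsto (fun n => τ₂ z * w n) atTop (𝓝 0) := by
          simpa using hw.const_mul (τ₂ z)
        have t := ((t1.sub t2).sub t3).sub t4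
        simp only [sub_zero] at t
        simpa only [← e] using t
      exact tendsto_nhds_unique h1 h2
  -- closed graph theorem
  have hcδ₁ : Continuous δ₁ := by
    have := (IsLinearMap.mk' δ₁ hδ₁).continuous_of_seq_closed_graph (fun u x y hu huy => ?_)
    · exact this
    have hv : Tendsto (fun n => u n - x) atTop (𝓝 0) := by
      simpa using hu.sub (tendsto_const_nhds (x := x))
    have hb : Tendsto (fun n => δ₁ (u n - x)) atTop (𝓝 (y - δ₁ x)) := by
      have : ∀ n, δ₁ (u n - x) = δ₁ (u n) - δ₁ x := fun n =>
        (IsLinearMap.mk' δ₁ hδ₁).map_sub (u n) x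
      simp only [this]
      exact huy.sub (tendsto_const_nhds (x := δ₁ x))
    have := keyδ hv hb
    simpa [sub_eq_zero] using this
  have hcτ₁ : Continuous τ₁ := by
    have := (IsLinearMap.mk' τ₁ hτ₁).continuous_of_seq_closed_graph (fun u x y hu huy => ?_)
    · exact this
    have hv : Tendsto (fun n => u n - x) atTop (𝓝 0) := by
      simpa using hu.sub (tendsto_const_nhds (x := x))
    have hb : Tendsto (fun n => τ₁ (u n - x)) atTop (𝓝 (y - τ₁ x)) := by
      have : ∀ n, τ₁ (u n - x) = τ₁ (u n) - τ₁ x := fun n =>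
        (IsLinearMap.mk' τ₁ hτ₁).map_sub (u n) x
      simp only [this]
      exact huy.sub (tendsto_const_nhds (x := τ₁ x))
    have := keyτ hv hb
    simpa [sub_eq_zero] using this
  exact ((hcδ₁.comp continuous_fst).add (hcτ₁.comp continuous_snd)).prodMk
    ((hcδ₂.comp continuous_fst).add (hcτ₂.comp continuous_snd))
end

section
/- If $\mathcal{A}$ has a bounded right approximate identity and $\psi:\mathcal{A}\to\mathcal{U}$ is a left $\mathcal{A}$-module homomorphism (not assumed continuous) into a Banach left $\mathcal{A}$-module $\mathcal{U}$, then $\psi$ is continuous. -/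
/-!
By Cohen's factorization theorem every null sequence of `A` factors as `a k = b k * c` with
`b k → 0`; then `ψ (a k) = m (b k) (ψ c) → 0`, and an additive map that is sequentially
continuous at `0` is continuous.

The factorization is built in the unitization `A⁺` with the `ℓ¹` norm. Starting from `u 0 = 1`,
put `u (n + 1) = u n - γ (1 - γ) ^ n (1 - e n)`, where `e n` is taken from the approximate unit so
close to a right identity for `(u n)⁻¹` and for all `a k * (u n)⁻¹` that `u (n + 1)` is
`u n * (1 - t)` with `‖t‖ ≤ 1 / 2`, and `a k * (u n)⁻¹` moves by at most `2⁻ⁿ`, uniformly in `k`.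
Then `u n → c`, `a k * (u n)⁻¹ → b k` uniformly in `k`, and `a k = (a k * (u n)⁻¹) * u n` gives
`a k = b k * c`; both `c` and `b k` lie in `A` because the scalar part `(1 - γ) ^ n` of `u n`
tends to `0`.
-/

open Filter Topology

/- The multiplication of a complex normed algebra need not be `ℂ`-bilinear, but it is `ℝ`-bilinear
by continuity; this is why the unitization is taken over `ℝ`. -/
lemma isScalarTower_real_of_complex {A : Type*} [NonUnitalNormedRing A] [NormedSpace ℂ A] :
    IsScalarTower ℝ A A :=
  ⟨fun r a b => map_real_smul (AddMonoidHom.mulRight b) (continuous_mul_const b) r a⟩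

lemma smulCommClass_real_of_complex {A : Type*} [NonUnitalNormedRing A] [NormedSpace ℂ A] :
    SMulCommClass ℝ A A :=
  ⟨fun r a b => (map_real_smul (AddMonoidHom.mulLeft a) (continuous_const_mul a) r b).symm⟩

theorem exists_tendstoUniformly_of_dist_le_geometric {ι α : Type*} [PseudoMetricSpace α]
    [CompleteSpace α] {F : ℕ → ι → α} {C r : ℝ} (hr₀ : 0 ≤ r) (hr : r < 1)
    (hF : ∀ n i, dist (F n i) (F (n + 1) i) ≤ C * r ^ n) :
    ∃ G : ι → α, TendstoUniformly F G atTop := by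
  choose G hG using fun i =>
    cauchySeq_tendsto_of_complete (cauchySeq_of_le_geometric r C hr (hF · i))
  have hbound : Tendsto (fun n : ℕ => C * r ^ n / (1 - r)) atTop (𝓝 0) := by
    simpa using ((tendsto_pow_atTop_nhds_zero_of_lt_one hr₀ hr).const_mul C).div_const (1 - r)
  refine ⟨G, Metric.tendstoUniformly_iff.2 fun ε hε => ?_⟩
  filter_upwards [(tendsto_order.1 hbound).2 ε hε] with n hn i
  rw [dist_comm]
  exact (dist_le_of_le_geometric_of_tendsto r C hr (hF · i) (hG i) n).trans_lt hn

section UnitizationL1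

variable (𝕜 : Type*) {A : Type*} [NormedField 𝕜] [NonUnitalNormedRing A] [NormedSpace 𝕜 A]
  [IsScalarTower 𝕜 A A] [SMulCommClass 𝕜 A A]

-- Unlike the default norm on `Unitization 𝕜 A`, the `ℓ¹` norm needs no regularity of `A`.
local notation "𝔸" => WithLp 1 (Unitization 𝕜 A)

noncomputable def inrL1 : A →ₙₐ[𝕜] 𝔸 :=
  (WithLp.unitizationAlgEquiv (𝕜 := 𝕜) (A := A) 𝕜).symm.toAlgHom.toNonUnitalAlgHom.comp
    (Unitization.inrNonUnitalAlgHom 𝕜 A)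

variable {𝕜}

noncomputable def fstL1 : 𝔸 →ₐ[𝕜] 𝕜 :=
  (Unitization.fstHom 𝕜 A).comp (WithLp.unitizationAlgEquiv (𝕜 := 𝕜) (A := A) 𝕜).toAlgHom

def sndL1 (x : 𝔸) : A := (WithLp.ofLp x).snd

lemma norm_eq_norm_fstL1_add_norm_sndL1 (x : 𝔸) :
    ‖x‖ = ‖fstL1 x‖ + ‖sndL1 x‖ :=
  WithLp.unitization_norm_def x

lemma norm_inrL1 (a : A) : ‖inrL1 𝕜 a‖ = ‖a‖ := WithLp.unitization_norm_inr a

lemma isometry_inrL1 : Isometry (inrL1 𝕜 : A → 𝔸) :=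
  WithLp.unitization_isometry_inr

lemma inrL1_injective : Function.Injective (inrL1 𝕜 : A → 𝔸) :=
  fun _ _ h => Unitization.inr_injective (congrArg WithLp.ofLp h)

@[simp] lemma fstL1_inrL1 (a : A) : fstL1 (inrL1 𝕜 a) = 0 := Unitization.fst_inr 𝕜 a

lemma algebraMap_fstL1_add_inrL1_sndL1 (x : 𝔸) :
    algebraMap 𝕜 _ (fstL1 x) + inrL1 𝕜 (sndL1 x) = x :=
  congrArg (WithLp.toLp 1) (Unitization.inl_fst_add_inr_snd_eq (WithLp.ofLp x))

lemma inrL1_sndL1_of_fstL1_eq_zero {x : 𝔸} (hx : fstL1 x = 0) :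
    inrL1 𝕜 (sndL1 x) = x := by
  simpa [hx] using algebraMap_fstL1_add_inrL1_sndL1 x

instance : NormOneClass (𝔸) :=
  ⟨by rw [norm_eq_norm_fstL1_add_norm_sndL1, map_one, norm_one, add_eq_left, norm_eq_zero]
      exact Unitization.snd_one⟩

lemma continuous_fstL1 : Continuous (fstL1 : 𝔸 → 𝕜) :=
  AddMonoidHomClass.continuous_of_bound fstL1 1 fun x => by
    rw [one_mul, norm_eq_norm_fstL1_add_norm_sndL1 x]
    exact le_add_of_nonneg_right (norm_nonneg _)

lemma norm_sndL1_le (x : 𝔸) : ‖sndL1 x‖ ≤ ‖x‖ := by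
  rw [norm_eq_norm_fstL1_add_norm_sndL1 x]
  exact le_add_of_nonneg_left (norm_nonneg _)

lemma norm_mul_one_sub_inrL1_le (x : 𝔸) (e : A) :
    ‖x * (1 - inrL1 𝕜 e)‖ ≤ ‖fstL1 x‖ * (1 + ‖e‖) + ‖sndL1 x * e - sndL1 x‖ := by
  have hx : x * (1 - inrL1 𝕜 e) =
      fstL1 x • (1 - inrL1 𝕜 e) - inrL1 𝕜 (sndL1 x * e - sndL1 x) := by
    conv_lhs => rw [← algebraMap_fstL1_add_inrL1_sndL1 x]
    rw [add_mul, Algebra.algebraMap_eq_smul_one, smul_mul_assoc, one_mul, map_sub, map_mul]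
    noncomm_ring
  rw [hx]
  refine (norm_sub_le _ _).trans (add_le_add ?_ (norm_inrL1 _).le)
  rw [norm_smul]
  gcongr
  exact (norm_sub_le _ _).trans (by rw [norm_one, norm_inrL1])

lemma norm_fstL1_smul_inv_mul_one_sub_inrL1_le (U : (𝔸)ˣ) (e : A) :
    ‖fstL1 (U : 𝔸) • (↑U⁻¹ * (1 - inrL1 𝕜 e))‖ ≤
      1 + ‖e‖ + ‖fstL1 (U : 𝔸)‖ *
        ‖sndL1 (↑U⁻¹ : 𝔸) * e - sndL1 (↑U⁻¹ : 𝔸)‖ := by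
  have hU : ‖fstL1 (U : 𝔸)‖ * ‖fstL1 (↑U⁻¹ : 𝔸)‖ = 1 := by
    rw [← norm_mul, ← map_mul, U.mul_inv, map_one, norm_one]
  rw [norm_smul]
  refine (mul_le_mul_of_nonneg_left (norm_mul_one_sub_inrL1_le _ e) (norm_nonneg _)).trans_eq ?_
  linear_combination (1 + ‖e‖) * hU

end UnitizationL1

lemma norm_mul_inv_oneSub_sub_le {R : Type*} [NormedRing R] [NormOneClass R]
    [HasSummableGeomSeries R] (x t : R) (ht : ‖t‖ < 1) :
    ‖x * ↑(Units.oneSub t ht)⁻¹ - x‖ ≤ ‖x * t‖ * (1 - ‖t‖)⁻¹ := by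
  have hinv : ‖(↑(Units.oneSub t ht)⁻¹ : R)‖ ≤ (1 - ‖t‖)⁻¹ := by
    have := tsum_geometric_le_of_norm_lt_one t ht
    rwa [norm_one, sub_self, zero_add] at this
  have hx : x * ↑(Units.oneSub t ht)⁻¹ - x = x * t * ↑(Units.oneSub t ht)⁻¹ := by
    have h := (Units.oneSub t ht).mul_inv
    rw [Units.val_oneSub, sub_mul, one_mul] at h
    rw [mul_assoc, ← mul_sub_one, ← h, sub_sub_cancel]
  rw [hx]
  exact (norm_mul_le _ _).trans (by gcongr)

def HasBoundedRightApproxUnit (A : Type*) [NonUnitalNormedRing A] (C : ℝ) : Prop :=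
  ∀ (F : Finset A) (ε : ℝ), 0 < ε → ∃ e : A, ‖e‖ ≤ C ∧ ∀ a ∈ F, ‖a * e - a‖ < ε

section Cohen

variable {A : Type*} [NonUnitalNormedRing A] {C : ℝ}

lemma HasBoundedRightApproxUnit.nonneg (hbai : HasBoundedRightApproxUnit A C) : 0 ≤ C := by
  obtain ⟨e, he, -⟩ := hbai ∅ 1 one_pos
  exact (norm_nonneg e).trans he

lemma HasBoundedRightApproxUnit.exists_of_tendsto_zero (hbai : HasBoundedRightApproxUnit A C)
    (F : Finset A) {g : ℕ → A} (hg : Tendsto g atTop (𝓝 0)) {ε : ℝ} (hε : 0 < ε) :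
    ∃ e : A, ‖e‖ ≤ C ∧ (∀ a ∈ F, ‖a * e - a‖ < ε) ∧ ∀ k, ‖g k * e - g k‖ < ε := by
  classical
  have hC := hbai.nonneg
  obtain ⟨N, hN⟩ := Metric.tendsto_atTop.1 hg (ε / (C + 1)) (by positivity)
  obtain ⟨e, he, hFe⟩ := hbai (F ∪ (Finset.range N).image g) ε hε
  refine ⟨e, he, fun a ha => hFe a (Finset.mem_union_left _ ha), fun k => ?_⟩
  rcases lt_or_ge k N with hk | hk
  · exact hFe _ (Finset.mem_union_right _ (Finset.mem_image_of_mem g (Finset.mem_range.2 hk)))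
  have hgk : ‖g k‖ < ε / (C + 1) := by simpa using hN k hk
  calc ‖g k * e - g k‖ ≤ ‖g k‖ * (C + 1) := by
        refine (norm_sub_le _ _).trans ?_
        rw [mul_add_one]
        gcongr
        exact (norm_mul_le _ _).trans (by gcongr)
    _ < ε := by rwa [← lt_div_iff₀ (by positivity)]

variable [NormedSpace ℝ A] [IsScalarTower ℝ A A] [SMulCommClass ℝ A A] [CompleteSpace A]

local notation "𝔸" => WithLp 1 (Unitization ℝ A)

lemma HasBoundedRightApproxUnit.exists_cohen_step_of_norm_mul_le
    (hbai : HasBoundedRightApproxUnit A C) {γ : ℝ} (hγ₀ : 0 < γ) (hγC : γ * (C + 2) ≤ 1 / 2)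
    {a : ℕ → A} (ha : Tendsto a atTop (𝓝 0)) (U : 𝔸ˣ) {δ : ℝ} (hδ : 0 < δ)
    (hsδ : ‖fstL1 (U : 𝔸)‖ * δ ≤ 1) :
    ∃ (U' : 𝔸ˣ) (e : A), ‖e‖ ≤ C ∧ (U' : 𝔸) = U - (γ * fstL1 (U : 𝔸)) • (1 - inrL1 ℝ e) ∧
      ∀ k, ‖inrL1 ℝ (a k) * ↑U'⁻¹ - inrL1 ℝ (a k) * ↑U⁻¹‖ ≤
        γ * ‖fstL1 (U : 𝔸)‖ * δ * 2 * ‖(↑U⁻¹ : 𝔸)‖ := by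
  set s := fstL1 (U : 𝔸)
  set g : ℕ → A := fun k => sndL1 (inrL1 ℝ (a k) * (↑U⁻¹ : 𝔸))
  have hg_eq : ∀ k, inrL1 ℝ (g k) = inrL1 ℝ (a k) * (↑U⁻¹ : 𝔸) :=
    fun k => inrL1_sndL1_of_fstL1_eq_zero (by simp)
  have hg : Tendsto g atTop (𝓝 0) := by
    refine squeeze_zero_norm (fun k => (norm_sndL1_le _).trans (norm_mul_le _ _)) ?_
    simpa [norm_inrL1] using ha.norm.mul_const ‖(↑U⁻¹ : 𝔸)‖
  obtain ⟨e, he, hv, hge⟩ := hbai.exists_of_tendsto_zero {sndL1 (↑U⁻¹ : 𝔸)} hg hδ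
  set t := (γ * s) • ((↑U⁻¹ : 𝔸) * (1 - inrL1 ℝ e)) with ht_def
  have ht : ‖t‖ ≤ 1 / 2 := by
    calc ‖t‖ = γ * ‖s • ((↑U⁻¹ : 𝔸) * (1 - inrL1 ℝ e))‖ := by
          rw [ht_def, mul_smul, norm_smul, Real.norm_of_nonneg hγ₀.le]
      _ ≤ γ * (1 + C + ‖s‖ * δ) := by
          gcongr
          refine (norm_fstL1_smul_inv_mul_one_sub_inrL1_le U e).trans ?_
          gcongr
          exact (hv _ (Finset.mem_singleton_self _)).le
      _ ≤ 1 / 2 := by nlinarith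
  let V := Units.oneSub t (by linarith)
  refine ⟨U * V, e, he, ?_, fun k => ?_⟩
  · rw [Units.val_mul, Units.val_oneSub, mul_sub, mul_one, mul_smul_comm, ← mul_assoc, U.mul_inv,
      one_mul]
  have hxt : ‖inrL1 ℝ (a k) * t‖ ≤ γ * ‖s‖ * δ := by
    rw [mul_smul_comm, ← mul_assoc, ← hg_eq, norm_smul, mul_sub, mul_one, ← map_mul, ← map_sub,
      norm_inrL1, norm_sub_rev, norm_mul, Real.norm_of_nonneg hγ₀.le]
    gcongr
    exact (hge k).le
  rw [mul_inv_rev, Units.val_mul, ← mul_assoc, ← sub_mul]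
  refine (norm_mul_le _ _).trans (mul_le_mul_of_nonneg_right ?_ (norm_nonneg _))
  refine (norm_mul_inv_oneSub_sub_le _ t _).trans
    (mul_le_mul hxt ?_ (inv_nonneg.2 (by linarith)) (by positivity))
  rw [inv_le_comm₀ (by linarith) two_pos]
  linarith

lemma HasBoundedRightApproxUnit.exists_cohen_step (hbai : HasBoundedRightApproxUnit A C) {γ : ℝ}
    (hγ₀ : 0 < γ) (hγC : γ * (C + 2) ≤ 1 / 2) {a : ℕ → A}
    (ha : Tendsto a atTop (𝓝 0)) (U : 𝔸ˣ) {ε : ℝ} (hε : 0 < ε) :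
    ∃ (U' : 𝔸ˣ) (e : A), ‖e‖ ≤ C ∧ (U' : 𝔸) = U - (γ * fstL1 (U : 𝔸)) • (1 - inrL1 ℝ e) ∧
      ∀ k, ‖inrL1 ℝ (a k) * ↑U'⁻¹ - inrL1 ℝ (a k) * ↑U⁻¹‖ ≤ ε := by
  have hγ₁ : γ ≤ 1 := by nlinarith [hbai.nonneg]
  set K := ‖fstL1 (U : 𝔸)‖ * (2 * ‖(↑U⁻¹ : 𝔸)‖ + 1)
  set δ := min 1 ε / (K + 1)
  have hδ : 0 < δ := by positivity
  have hKδ : K * δ ≤ min 1 ε := by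
    rw [mul_div_assoc', div_le_iff₀ (by positivity)]
    nlinarith [show 0 < min 1 ε by positivity]
  have hsδ : ‖fstL1 (U : 𝔸)‖ * δ ≤ 1 := by
    refine le_trans ?_ (hKδ.trans (min_le_left _ _))
    gcongr
    exact le_mul_of_one_le_right (norm_nonneg _) (by linarith [norm_nonneg (↑U⁻¹ : 𝔸)])
  obtain ⟨U', e, he, hU', hclose⟩ := hbai.exists_cohen_step_of_norm_mul_le hγ₀ hγC ha U hδ hsδ
  refine ⟨U', e, he, hU', fun k => (hclose k).trans ?_⟩
  have : 0 ≤ ‖fstL1 (U : 𝔸)‖ * δ * ‖(↑U⁻¹ : 𝔸)‖ := by positivity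
  nlinarith [mul_nonneg (norm_nonneg (fstL1 (U : 𝔸))) hδ.le, min_le_right 1 ε]

lemma HasBoundedRightApproxUnit.exists_cohen_sequence (hbai : HasBoundedRightApproxUnit A C) {γ : ℝ}
    (hγ₀ : 0 < γ) (hγC : γ * (C + 2) ≤ 1 / 2) {a : ℕ → A}
    (ha : Tendsto a atTop (𝓝 0)) :
    ∃ U : ℕ → 𝔸ˣ, (∀ m, fstL1 (U m : 𝔸) = (1 - γ) ^ m) ∧
      (∀ m, dist (U m : 𝔸) (U (m + 1) : 𝔸) ≤ γ * (1 + C) * (1 - γ) ^ m) ∧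
      ∀ m k, dist (inrL1 ℝ (a k) * ↑(U m)⁻¹) (inrL1 ℝ (a k) * ↑(U (m + 1))⁻¹) ≤ (1 / 2) ^ m := by
  choose next e he hnext hclose using fun m (U : 𝔸ˣ) =>
    hbai.exists_cohen_step hγ₀ hγC ha U (ε := (1 / 2) ^ m) (by positivity)
  obtain ⟨U, hU₀, hU⟩ : ∃ U : ℕ → 𝔸ˣ, U 0 = 1 ∧ ∀ m, U (m + 1) = next m (U m) :=
    ⟨fun m => Nat.rec 1 next m, rfl, fun _ => rfl⟩
  have hfst : ∀ m, fstL1 (U m : 𝔸) = (1 - γ) ^ m := by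
    intro m
    induction m with
    | zero => rw [hU₀, Units.val_one, map_one, pow_zero]
    | succ m ih =>
      rw [hU, hnext, map_sub, map_smul, map_sub, map_one, fstL1_inrL1, ih, pow_succ, smul_eq_mul]
      ring
  refine ⟨U, hfst, fun m => ?_, fun m k => ?_⟩
  · have hγ₁ : γ ≤ 1 := by nlinarith [hbai.nonneg]
    rw [hU, dist_eq_norm, hnext, sub_sub_cancel, norm_smul, hfst,
      Real.norm_of_nonneg (mul_nonneg hγ₀.le (pow_nonneg (by linarith) m))]
    calc γ * (1 - γ) ^ m * ‖1 - inrL1 ℝ (e m (U m))‖ ≤ γ * (1 - γ) ^ m * (1 + C) := by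
          gcongr
          exact (norm_sub_le _ _).trans (by rw [norm_one, norm_inrL1]; gcongr; exact he _ _)
      _ = γ * (1 + C) * (1 - γ) ^ m := by ring
  · rw [hU, dist_comm, dist_eq_norm]
    exact hclose m (U m) k

theorem HasBoundedRightApproxUnit.exists_tendsto_zero_mul_eq
    (hbai : HasBoundedRightApproxUnit A C) {a : ℕ → A} (ha : Tendsto a atTop (𝓝 0)) :
    ∃ (c : A) (b : ℕ → A), Tendsto b atTop (𝓝 0) ∧ ∀ k, a k = b k * c := by
  have hC := hbai.nonneg
  set γ := 1 / (2 * (C + 2)) with hγ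
  have hγ₀ : 0 < γ := by positivity
  have hγC : γ * (C + 2) = 1 / 2 := by rw [hγ]; field_simp
  have hγ₁ : γ < 1 := by nlinarith
  obtain ⟨U, hfst, hU, hUinv⟩ := hbai.exists_cohen_sequence hγ₀ hγC.le ha
  obtain ⟨c', hc'⟩ := cauchySeq_tendsto_of_complete
    (cauchySeq_of_le_geometric (1 - γ) (γ * (1 + C)) (by linarith) hU)
  have hc'fst : fstL1 c' = 0 := by
    refine tendsto_nhds_unique ((continuous_fstL1.tendsto c').comp hc') ?_
    simpa [Function.comp_def, hfst] using
      tendsto_pow_atTop_nhds_zero_of_lt_one (by linarith) (by linarith : 1 - γ < 1)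
  obtain ⟨b', hb'⟩ := exists_tendstoUniformly_of_dist_le_geometric (C := 1) (by norm_num)
    (by norm_num) fun m k => (hUinv m k).trans_eq (one_mul _).symm
  have hb'fst : ∀ k, fstL1 (b' k) = 0 := fun k =>
    tendsto_nhds_unique ((continuous_fstL1.tendsto _).comp (hb'.tendsto_at k))
      (tendsto_const_nhds.congr fun m => by simp)
  have hfact : ∀ k, inrL1 ℝ (a k) = b' k * c' := fun k => by
    refine tendsto_nhds_unique (tendsto_const_nhds.congr fun m => ?_) ((hb'.tendsto_at k).mul hc')
    simp [mul_assoc]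
  have hb'0 : Tendsto b' atTop (𝓝 0) := by
    refine hb'.tendsto_of_eventually_tendsto (L := fun _ => 0) (Eventually.of_forall fun m => ?_)
      tendsto_const_nhds
    simpa using ((isometry_inrL1.continuous.tendsto' 0 0 (map_zero _)).comp ha).mul_const
      (↑(U m)⁻¹ : 𝔸)
  refine ⟨sndL1 c', fun k => sndL1 (b' k),
    squeeze_zero_norm (fun k => norm_sndL1_le _) (by simpa using hb'0.norm), fun k => ?_⟩
  apply inrL1_injective (𝕜 := ℝ)
  rw [map_mul, inrL1_sndL1_of_fstL1_eq_zero hc'fst, inrL1_sndL1_of_fstL1_eq_zero (hb'fst k), hfact]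

end Cohen

theorem stmt_15_general {A U : Type*} [NonUnitalNormedRing A] [NormedSpace ℂ A] [CompleteSpace A]
    [NormedAddCommGroup U] [NormedSpace ℂ U]
    (m : A → U → U)
    (m_norm : ∀ (a : A) (x : U), ‖m a x‖ ≤ ‖a‖ * ‖x‖)
    (hbai : ∃ C : ℝ, 0 < C ∧ ∀ (F : Finset A) (ε : ℝ), 0 < ε →
      ∃ e : A, ‖e‖ ≤ C ∧ ∀ a ∈ F, ‖a * e - a‖ < ε)
    (ψ : A → U) (hψlin : IsLinearMap ℂ ψ)
    (hψ : ∀ a b : A, ψ (a * b) = m a (ψ b)) :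
    Continuous ψ := by
  have := isScalarTower_real_of_complex (A := A)
  have := smulCommClass_real_of_complex (A := A)
  obtain ⟨C, -, hC⟩ := hbai
  refine continuous_of_continuousAt_zero (hψlin.mk' ψ).toAddMonoidHom ?_
  rw [ContinuousAt, map_zero, tendsto_nhds_iff_seq_tendsto]
  intro a ha
  obtain ⟨c, b, hb, hab⟩ := HasBoundedRightApproxUnit.exists_tendsto_zero_mul_eq hC ha
  refine squeeze_zero_norm (fun k => ?_) (by simpa using hb.norm.mul_const ‖ψ c‖)
  simpa [hab, hψ] using m_norm (b k) (ψ c)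

/-- If `A` is a Banach algebra with a bounded right approximate identity and `U` is a
Banach left `A`-module, then every (not necessarily continuous) left `A`-module
homomorphism `ψ : A → U` is continuous. -/
theorem stmt_15 {A U : Type*} [NonUnitalNormedRing A] [NormedSpace ℂ A] [CompleteSpace A]
    [NormedAddCommGroup U] [NormedSpace ℂ U] [CompleteSpace U]
    (m : A → U → U)
    (m_add₁ : ∀ (a b : A) (x : U), m (a + b) x = m a x + m b x)
    (m_add₂ : ∀ (a : A) (x y : U), m a (x + y) = m a x + m a y)
    (m_mul : ∀ (a b : A) (x : U), m (a * b) x = m a (m b x))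
    (m_norm : ∀ (a : A) (x : U), ‖m a x‖ ≤ ‖a‖ * ‖x‖)
    (hbai : ∃ C : ℝ, 0 < C ∧ ∀ (F : Finset A) (ε : ℝ), 0 < ε →
      ∃ e : A, ‖e‖ ≤ C ∧ ∀ a ∈ F, ‖a * e - a‖ < ε)
    (ψ : A → U) (hψlin : IsLinearMap ℂ ψ)
    (hψ : ∀ a b : A, ψ (a * b) = m a (ψ b)) :
    Continuous ψ :=
  stmt_15_general m m_norm hbai ψ hψlin hψ
end

section
/- Let $T(\mathcal{A},\mathcal{U})$ be the module extension Banach algebra. Suppose there exist $\mathcal{A}$-bimodule homomorphisms $\phi:\mathcal{A}\to\mathcal{U}$ and $\psi:\mathcal{U}\to\mathcal{A}$ with $\phi\circ\psi = I_{\mathcal{U}}$. If every derivation on $T(\mathcal{A},\mathcal{U})$ is continuous, then every derivation on $\mathcal{A}$ is continuous. -/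
open Filter Topology

variable {A U : Type*} [NonUnitalNormedRing A] [NonUnitalNormedRing U]

/-- Module extension: if there are `A`-bimodule homomorphisms `φ : A → U` and
`ψ : U → A` with `φ ∘ ψ = id`, and every derivation on `T(A,U)` (the semidirect
product with trivial multiplication on `U`) is continuous, then every derivation on `A`
is continuous. -/
theorem stmt_17 [NormedSpace ℂ A] [NormedSpace ℂ U]
    [CompleteSpace A] [CompleteSpace U] (S : SDP A U)
    (htriv : ∀ x y : U, x * y = 0)
    (φ : A → U) (ψ : U → A)
    (hφlin : IsLinearMap ℂ φ) (hψlin : IsLinearMap ℂ ψ)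
    (hφl : ∀ a b : A, φ (a * b) = S.l a (φ b))
    (hφr : ∀ a b : A, φ (a * b) = S.r (φ a) b)
    (hψl : ∀ (a : A) (x : U), ψ (S.l a x) = a * ψ x)
    (hψr : ∀ (x : U) (a : A), ψ (S.r x a) = ψ x * a)
    (hcomp : ∀ x : U, φ (ψ x) = x)
    (hcont : ∀ D : A × U → A × U, IsLinearMap ℂ D → S.IsDer D → Continuous D) :
    ∀ δ : A → A, IsLinearMap ℂ δ →
      (∀ a b : A, δ (a * b) = a * δ b + δ a * b) → Continuous δ := by
  intro δ hδlin hδder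
  set τ : U → U := fun x => φ (δ (ψ x)) with hτ
  have hτadd : ∀ x y : U, τ (x + y) = τ x + τ y := by
    intro x y
    simp only [hτ, hψlin.map_add, hδlin.map_add, hφlin.map_add]
  have h1 : ∀ (a : A) (x : U), τ (S.l a x) = S.l a (τ x) + S.l (δ a) x := by
    intro a x
    simp only [hτ, hψl, hδder, hφlin.map_add, hφl, hcomp]
  have h2 : ∀ (x : U) (a : A), τ (S.r x a) = S.r (τ x) a + S.r x (δ a) := by
    intro x a
    simp only [hτ, hψr, hδder, hφlin.map_add, hφr, hcomp]
    exact add_comm _ _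
  set D : A × U → A × U := fun p => (δ p.1, τ p.2) with hD
  have hDlin : IsLinearMap ℂ D := by
    constructor
    · intro p q
      simp only [hD, hτ, Prod.fst_add, Prod.snd_add, hδlin.map_add, hψlin.map_add,
        hφlin.map_add, Prod.mk_add_mk]
    · intro c p
      simp only [hD, hτ, Prod.smul_fst, Prod.smul_snd, hδlin.map_smul, hψlin.map_smul,
        hφlin.map_smul, Prod.smul_mk]
  have hDder : S.IsDer D := by
    intro p q
    simp only [hD, SDP.mul, htriv, add_zero, Prod.mk_add_mk, Prod.mk.injEq]
    constructor
    · exact hδder p.1 q.1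
    · rw [hτadd, h1, h2]
      abel
  have hDcont := hcont D hDlin hDder
  have : δ = fun a => (D (a, (0 : U))).1 := rfl
  rw [this]
  exact continuous_fst.comp (hDcont.comp (continuous_id.prodMk continuous_const))
end
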